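/- Let E be a finite-dimensional real vector space with a nondegenerate symmetric bilinear form ⟨·,·⟩, and let G ∈ End(E) satisfy G² = Id and ⟨Gu,Gv⟩ = ⟨u,v⟩ for all u,v ∈ E; set n := dim ker(G + Id). Let ℱ ∈ End(E) be ⟨·,·⟩-skew-symmetric, commute with G, have kernel equal to the line spanned by a vector u₀ with ⟨u₀,u₀⟩ = (−1)ⁿ, and satisfy ℱ² = −Id + (−1)ⁿ⟨·,u₀⟩u₀. Define the symmetric bilinear form 𝒢(u,v) := ⟨Gu,v⟩. Then for all u,v ∈ E: 𝒢(ℱu,ℱv) = 𝒢(u,v) − ⟨u,u₀⟩⟨v,u₀⟩ and 𝒢(ℱu,v) = −𝒢(u,ℱv). -/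
import Mathlib

lemma even_finrank_of_J {M : Type*} [AddCommGroup M] [Module ℝ M] [FiniteDimensional ℝ M]
    (J : M →ₗ[ℝ] M) (hJ : ∀ v, J (J v) = -v) : Even (Module.finrank ℝ M) := by
  letI : SMul ℂ M := ⟨fun z v => z.re • v + z.im • J v⟩
  have hsmul : ∀ (z : ℂ) (v : M), z • v = z.re • v + z.im • J v := fun _ _ => rfl
  letI : Module ℂ M :=
    { one_smul := fun v => by simp [hsmul]
      mul_smul := fun z w v => by
        simp only [hsmul, Complex.mul_re, Complex.mul_im, map_add, map_smul, hJ,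
          smul_add, smul_smul, sub_smul, add_smul, smul_neg]
        ring_nf
        abel
      smul_zero := fun z => by simp [hsmul]
      smul_add := fun z v w => by simp [hsmul]; abel
      add_smul := fun z w v => by simp [hsmul, add_smul]; abel
      zero_smul := fun v => by simp [hsmul] }
  haveI : IsScalarTower ℝ ℂ M := ⟨fun r z v => by
    simp [hsmul, Complex.smul_re, Complex.smul_im, smul_smul, smul_add]⟩
  haveI : FiniteDimensional ℂ M := FiniteDimensional.right ℝ ℂ M
  have h := Module.finrank_mul_finrank ℝ ℂ M
  rw [Complex.finrank_real_complex] at h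
  exact ⟨Module.finrank ℂ M, by omega⟩

/-- Lemma 3.2 ii) (pointwise): with `𝒢(u,v) := ⟨Gu,v⟩`, one has
`𝒢(ℱu,ℱv) = 𝒢(u,v) − ⟨u,u₀⟩⟨v,u₀⟩` and `𝒢(ℱu,v) = −𝒢(u,ℱv)`. -/
theorem stmt_1 {E : Type*} [AddCommGroup E] [Module ℝ E] [FiniteDimensional ℝ E]
    (B : LinearMap.BilinForm ℝ E)
    (hBsymm : ∀ u v, B u v = B v u)
    (hBnd : ∀ u, (∀ v, B u v = 0) → u = 0)
    (G : E →ₗ[ℝ] E)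
    (hG2 : ∀ u, G (G u) = u)
    (hGorth : ∀ u v, B (G u) (G v) = B u v)
    (n : ℕ)
    (hn : n = Module.finrank ℝ (LinearMap.ker (G + (LinearMap.id : E →ₗ[ℝ] E))))
    (F : E →ₗ[ℝ] E)
    (hFskew : ∀ u v, B (F u) v = - B u (F v))
    (hFG : ∀ u, F (G u) = G (F u))
    (u₀ : E)
    (hker : LinearMap.ker F = Submodule.span ℝ {u₀})
    (hu₀ : B u₀ u₀ = (-1 : ℝ) ^ n)
    (hF2 : ∀ v, F (F v) = -v + ((-1 : ℝ) ^ n * B v u₀) • u₀) :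
    (∀ u v, B (G (F u)) (F v) = B (G u) v - B u u₀ * B v u₀) ∧
    (∀ u v, B (G (F u)) v = - B (G u) (F v)) := by
  have hpow : ((-1 : ℝ)) ^ n * (-1 : ℝ) ^ n = 1 := by
    rw [← pow_add]; exact Even.neg_one_pow ⟨n, rfl⟩
  have hpne : ((-1 : ℝ)) ^ n ≠ 0 := by positivity
  have hu0ne : u₀ ≠ 0 := by
    intro h; rw [h] at hu₀; simp at hu₀; exact hpne hu₀.symm
  have hFu0 : F u₀ = 0 := by
    have : u₀ ∈ LinearMap.ker F := by
      rw [hker]; exact Submodule.mem_span_singleton_self u₀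
    exact this
  -- G u₀ is a multiple of u₀
  have hGu0ker : G u₀ ∈ LinearMap.ker F := by
    simp [LinearMap.mem_ker, hFG, hFu0]
  rw [hker, Submodule.mem_span_singleton] at hGu0ker
  obtain ⟨c, hc⟩ := hGu0ker
  have hc2 : c * c = 1 := by
    have h1 := hG2 u₀
    rw [← hc, map_smul, ← hc, smul_smul] at h1
    by_contra h
    have h2 : (c * c - 1) • u₀ = 0 := by rw [sub_smul, h1, one_smul, sub_self]
    rcases smul_eq_zero.mp h2 with h' | h'
    · exact h (by linarith [sub_eq_zero.mp h'])
    · exact hu0ne h'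
  have hflip : ∀ v, (B.flip u₀) v = B v u₀ := fun v => rfl
  -- the eigenspace V₋ and the subspace Z
  set V : Submodule ℝ E := LinearMap.ker (G + (LinearMap.id : E →ₗ[ℝ] E)) with hV
  have hVmem : ∀ v, v ∈ V ↔ G v = -v := by
    intro v
    simp only [hV, LinearMap.mem_ker, LinearMap.add_apply, LinearMap.id_apply]
    constructor
    · intro h; exact eq_neg_of_add_eq_zero_left h
    · intro h; rw [h]; abel
  set Z : Submodule ℝ E := V ⊓ LinearMap.ker (B.flip u₀) with hZ
  have hZmem : ∀ v, v ∈ Z ↔ (G v = -v ∧ B v u₀ = 0) := by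
    intro v
    rw [hZ, Submodule.mem_inf, hVmem v, LinearMap.mem_ker, hflip v]
  -- F stabilizes Z and squares to -1 there
  have hstab : ∀ x ∈ Z, F x ∈ Z := by
    intro x hx
    rw [hZmem] at hx ⊢
    constructor
    · rw [← hFG, hx.1, map_neg]
    · rw [hFskew, hFu0, map_zero, neg_zero]
  set J : Z →ₗ[ℝ] Z := F.restrict hstab with hJdef
  have hJ : ∀ v : Z, J (J v) = -v := by
    intro v
    apply Subtype.ext
    have h1 : ((J (J v) : Z) : E) = F (F (v : E)) := rfl
    rw [h1, hF2]
    have : B (v : E) u₀ = 0 := ((hZmem _).mp v.2).2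
    simp [this]
  have hZeven : Even (Module.finrank ℝ Z) := even_finrank_of_J J hJ
  -- B v u₀ vanishing on V depending on c
  have hVB : ∀ v ∈ V, (1 + c) * B v u₀ = 0 := by
    intro v hv
    have h1 : B v u₀ = B (G v) (G u₀) := (hGorth v u₀).symm
    rw [(hVmem v).mp hv, ← hc] at h1
    simp only [map_neg, LinearMap.neg_apply, map_smul, smul_eq_mul] at h1
    nlinarith [h1]
  -- key: c = (-1)^n
  have hkey : c = (-1 : ℝ) ^ n := by
    rcases mul_self_eq_one_iff.mp hc2 with h1 | h1
    · -- c = 1 : Z = V, n even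
      have hle : V ≤ LinearMap.ker (B.flip u₀) := by
        intro v hv
        have h2 := hVB v hv
        rw [h1] at h2
        rw [LinearMap.mem_ker, hflip v]
        linarith
      have hZV : Z = V := by rw [hZ]; exact inf_eq_left.mpr hle
      rw [h1]
      have : Even n := by rw [hn, ← hZV]; exact hZeven
      exact (Even.neg_one_pow this).symm
    · -- c = -1 : V = span u₀ ⊕ Z, n odd
      have hu0V : u₀ ∈ V := by rw [hVmem, ← hc, h1, neg_one_smul]
      have hsup : Submodule.span ℝ {u₀} ⊔ Z = V := by
        apply le_antisymm
        · apply sup_le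
          · rw [Submodule.span_singleton_le_iff_mem]; exact hu0V
          · rw [hZ]; exact inf_le_left
        · intro v hv
          have hdecomp : v = ((-1 : ℝ) ^ n * B v u₀) • u₀ +
              (v - ((-1 : ℝ) ^ n * B v u₀) • u₀) := by abel
          rw [hdecomp]
          apply Submodule.add_mem_sup
          · exact Submodule.smul_mem _ _ (Submodule.mem_span_singleton_self u₀)
          · rw [hZmem]
            constructor
            · rw [map_sub, (hVmem v).mp hv, map_smul, ← hc, h1, neg_one_smul]
              module
            · simp only [map_sub, LinearMap.sub_apply, map_smul, LinearMap.smul_apply,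
                smul_eq_mul, hu₀]
              linear_combination (-(B v u₀)) * hpow
      have hinf : Submodule.span ℝ {u₀} ⊓ Z = ⊥ := by
        rw [eq_bot_iff]
        intro x hx
        rw [Submodule.mem_inf] at hx
        obtain ⟨hx1, hx2⟩ := hx
        rw [Submodule.mem_span_singleton] at hx1
        obtain ⟨a, ha⟩ := hx1
        have hB0 : B x u₀ = 0 := ((hZmem _).mp hx2).2
        rw [← ha, map_smul, LinearMap.smul_apply, hu₀, smul_eq_mul] at hB0
        have ha0 : a = 0 := by
          rcases mul_eq_zero.mp hB0 with h | h
          · exact h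
          · exact absurd h hpne
        rw [← ha, ha0, zero_smul]
        exact Submodule.zero_mem ⊥
      have hrank := Submodule.finrank_sup_add_finrank_inf_eq
        (Submodule.span ℝ {u₀}) Z
      rw [hsup, hinf, finrank_span_singleton hu0ne, finrank_bot] at hrank
      have hodd : Odd n := by
        rw [hn]
        obtain ⟨k, hk⟩ := hZeven
        exact ⟨k, by omega⟩
      rw [h1, Odd.neg_one_pow hodd]
  -- consequence: B (G u) u₀ = (-1)^n * B u u₀
  have hGB : ∀ u, B (G u) u₀ = (-1 : ℝ) ^ n * B u u₀ := by
    intro u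
    have h1 : B (G u) u₀ = B (G (G u)) (G u₀) := (hGorth (G u) u₀).symm
    rw [hG2, ← hc, hkey, map_smul, smul_eq_mul] at h1
    exact h1
  constructor
  · intro u v
    rw [← hFG, hFskew, hF2]
    simp only [map_add, map_neg, map_smul, smul_eq_mul]
    rw [hGB]
    linear_combination (-(B u u₀ * B v u₀)) * hpow
  · intro u v
    rw [← hFG, hFskew]
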